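/- arXiv:1509.05234 — 2 statements merged into one kernel-verified Lean document; each statement's English description precedes it below -/
import Mathlib

section
/- Let d' : W₋₁ → W and d : W → W₁ be bounded linear maps of Hilbert spaces with d ∘ d' = 0, and let Δ = d* ∘ d + d' ∘ (d')*. Then the Hilbert space W decomposes as an orthogonal direct sum W = ker Δ ⊕ closure(range d') ⊕ (ker d)ᗮ. -/
/-!
Since `⟪Δ x, x⟫ = ‖d x‖² + ‖d'* x‖²`, the harmonic space `ker Δ` is `ker d ∩ ker d'*`, and
`ker d'* = (range d')ᗮ = (closure (range d'))ᗮ`. As `d ∘ d' = 0`, the closed subspace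
`closure (range d')` lies in `ker d`, so `ker d = closure (range d') ⊕ ker Δ`; adding
`W = ker d ⊕ (ker d)ᗮ` gives the decomposition.
-/

open ContinuousLinearMap

open scoped InnerProduct

namespace ContinuousLinearMap

variable {𝕜 E F G : Type*} [RCLike 𝕜]
  [NormedAddCommGroup E] [InnerProductSpace 𝕜 E] [CompleteSpace E]
  [NormedAddCommGroup F] [InnerProductSpace 𝕜 F] [CompleteSpace F]
  [NormedAddCommGroup G] [InnerProductSpace 𝕜 G] [CompleteSpace G]

theorem ker_adjoint_comp_self_add_adjoint_comp_self (A : E →L[𝕜] F) (B : E →L[𝕜] G) :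
    (A† ∘L A + B† ∘L B).ker = A.ker ⊓ B.ker := by
  refine le_antisymm (fun x hx ↦ ?_) fun x ⟨hA, hB⟩ ↦ by simp_all
  have hnorm : ‖A x‖ ^ 2 + ‖B x‖ ^ 2 = 0 := by
    simpa [inner_add_left, adjoint_inner_left, inner_self_eq_norm_sq] using
      congr(RCLike.re (inner 𝕜 ($(LinearMap.mem_ker.1 hx)) x))
  have hAx : ‖A x‖ = 0 := by nlinarith [norm_nonneg (A x), norm_nonneg (B x)]
  have hBx : ‖B x‖ = 0 := by nlinarith [norm_nonneg (A x), norm_nonneg (B x)]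
  exact ⟨norm_eq_zero.1 hAx, norm_eq_zero.1 hBx⟩

end ContinuousLinearMap

/-- Orthogonal decomposition `W = ker Δ ⊕ closure(range d') ⊕ (ker d)ᗮ`. -/
theorem laplacian_orthogonal_decomposition
    {Wm W W₁ : Type*}
    [NormedAddCommGroup Wm] [InnerProductSpace ℂ Wm] [CompleteSpace Wm]
    [NormedAddCommGroup W] [InnerProductSpace ℂ W] [CompleteSpace W]
    [NormedAddCommGroup W₁] [InnerProductSpace ℂ W₁] [CompleteSpace W₁]
    (d : W →L[ℂ] W₁) (d' : Wm →L[ℂ] W)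
    (h : d.comp d' = 0) :
    LinearMap.ker (((adjoint d).comp d + d'.comp (adjoint d') : W →L[ℂ] W) : W →ₗ[ℂ] W) ⟂
      (LinearMap.range (d' : Wm →ₗ[ℂ] W)).topologicalClosure ∧
    LinearMap.ker (((adjoint d).comp d + d'.comp (adjoint d') : W →L[ℂ] W) : W →ₗ[ℂ] W) ⟂ (LinearMap.ker (d : W →ₗ[ℂ] W₁))ᗮ ∧
    (LinearMap.range (d' : Wm →ₗ[ℂ] W)).topologicalClosure ⟂ (LinearMap.ker (d : W →ₗ[ℂ] W₁))ᗮ ∧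
    LinearMap.ker (((adjoint d).comp d + d'.comp (adjoint d') : W →L[ℂ] W) : W →ₗ[ℂ] W) ⊔
      (LinearMap.range (d' : Wm →ₗ[ℂ] W)).topologicalClosure ⊔ (LinearMap.ker (d : W →ₗ[ℂ] W₁))ᗮ = ⊤ := by
  set K := d'.range.topologicalClosure
  have hK : K ≤ d.ker :=
    d'.range.topologicalClosure_minimal (LinearMap.range_le_ker_iff.2 congr(toLinearMap $h))
      d.isClosed_ker
  have hΔ : (d† ∘L d + d' ∘L d'†).ker = d.ker ⊓ Kᗮ := by
    rw [Submodule.orthogonal_closure, orthogonal_range]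
    simpa using ker_adjoint_comp_self_add_adjoint_comp_self d (d'†)
  refine ⟨Submodule.isOrtho_iff_le.2 (hΔ ▸ inf_le_right),
    (Submodule.isOrtho_orthogonal_right _).mono_left (hΔ ▸ inf_le_left),
    (Submodule.isOrtho_orthogonal_right _).mono_left hK, ?_⟩
  rw [hΔ, sup_comm (d.ker ⊓ _), inf_comm,
    Submodule.sup_orthogonal_inf_of_hasOrthogonalProjection hK,
    Submodule.sup_orthogonal_of_hasOrthogonalProjection]
end

section
/- In the 4-regular tree X (the Cayley graph of the free group F₂ of rank 2), the first ℓ²-cohomology is nonzero: there exists a nonzero square-summable function c on the edge set of X lying in the kernel of the adjoint d* of the coboundary operator d : ℓ²(V) → ℓ²(E), where d(f)(e) = f(e₊) − f(e₋) and d*(g)(v) = Σ_{e: e₊ = v} g(e) − Σ_{e: e₋ = v} g(e). -/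
/-! Root the Cayley tree of the free group on `α` at `1`, so that every vertex `v ≠ 1` has one
parent (delete the last letter of its reduced word) and `b = 2 |α| - 1` children. Given weights
`w` on the letters with `∑ w = 0`, send the flow `w x` along the edge `1 → x` and let the flow
entering any other vertex split evenly among its children. This flow is divergence-free: at the
root because `∑ w = 0`, elsewhere by construction. An edge at distance `n` from the root carries
flow `O(b⁻ⁿ)`, and there are at most `(b + 1)ⁿ` of them; since `b + 1 < b²` once `|α| ≥ 2`, the
flow is square-summable. -/

theorem List.summable_pow_length {β : Type*} [Fintype β] {r : ℝ} (hr₀ : 0 ≤ r)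
    (hr : Fintype.card β * r < 1) : Summable fun l : List β => r ^ l.length := by
  rw [← (Equiv.sigmaFiberEquiv List.length).summable_iff]
  have hfiber (n : ℕ) :
      ∑' l : {l : List β // l.length = n}, r ^ (l : List β).length = (Fintype.card β * r) ^ n := by
    change ∑' l : List.Vector β n, r ^ l.1.length = _
    simp_rw [List.Vector.length_val, tsum_fintype, Finset.sum_const, Finset.card_univ,
      card_vector, nsmul_eq_mul, mul_pow, Nat.cast_pow]
  refine (summable_sigma_of_nonneg fun _ => pow_nonneg hr₀ _).2 ⟨fun n => ?_, ?_⟩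
  · change Summable fun l : List.Vector β n => _
    exact .of_finite
  · exact (summable_geometric_of_lt_one (by positivity) hr).congr fun n => (hfiber n).symm

namespace FreeGroup

variable {α : Type*}

theorem mul_mk_mul_mk_inv (v : FreeGroup α) (x : α × Bool) :
    v * mk [x] * mk [(x.1, !x.2)] = v := by
  rw [show mk [(x.1, !x.2)] = (mk [x])⁻¹ by simp [inv_mk, invRev], mul_inv_cancel_right]

variable (α) in
def branching [Fintype α] : ℕ := Fintype.card (α × Bool) - 1

theorem branching_pos [Fintype α] [Nonempty α] : 0 < branching α := by
  have : 2 ≤ Fintype.card (α × Bool) := by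
    simp only [Fintype.card_prod, Fintype.card_bool]
    linarith [Fintype.card_pos (α := α)]
  unfold branching
  omega

theorem card_prod_bool_eq_branching_add_one [Fintype α] [Nonempty α] :
    Fintype.card (α × Bool) = branching α + 1 := by
  have := branching_pos (α := α)
  unfold branching at this ⊢
  omega

theorem three_le_branching [Fintype α] [Nontrivial α] : 3 ≤ branching α := by
  have := Fintype.one_lt_card (α := α)
  simp only [branching, Fintype.card_prod, Fintype.card_bool]
  omega

variable [DecidableEq α]

theorem summable_pow_norm [Fintype α] {r : ℝ} (hr₀ : 0 ≤ r)
    (hr : Fintype.card (α × Bool) * r < 1) : Summable fun v : FreeGroup α => r ^ norm v :=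
  (List.summable_pow_length hr₀ hr).comp_injective toWord_injective

theorem toWord_mul_mk_of_toWord_eq_append {v : FreeGroup α} {L : List (α × Bool)}
    {x : α × Bool} (h : v.toWord = L ++ [(x.1, !x.2)]) : (v * mk [x]).toWord = L := by
  have hL : IsReduced L := isReduced_toWord.infix (h ▸ List.prefix_append L _).isInfix
  have hstep : Red.Step (L ++ [(x.1, !x.2), x]) (L ++ []) := Red.Step.not_rev
  rw [toWord_mul, toWord_mk, reduce_singleton, h, List.append_assoc, List.singleton_append,
    reduce.Step.eq hstep, L.append_nil, hL.reduce_eq]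

theorem toWord_mul_mk_of_getLast?_ne {v : FreeGroup α} {x : α × Bool}
    (h : v.toWord.getLast? ≠ some (x.1, !x.2)) : (v * mk [x]).toWord = v.toWord ++ [x] := by
  rw [toWord_mul, toWord_mk, reduce_singleton]
  refine IsReduced.reduce_eq (List.isChain_append.2 ⟨isReduced_toWord, .singleton x, ?_⟩)
  rintro y hy z hz hfst
  obtain rfl : x = z := Option.some.inj hz
  by_contra hsnd
  exact h (Option.mem_def.1 hy ▸ congrArg some (Prod.ext hfst (Bool.eq_not.2 hsnd)))

theorem norm_mul_mk_eq_or (v : FreeGroup α) (x : α × Bool) :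
    norm (v * mk [x]) = norm v + 1 ∨ norm (v * mk [x]) + 1 = norm v := by
  by_cases h : v.toWord.getLast? = some (x.1, !x.2)
  · obtain ⟨L, hL⟩ := List.getLast?_eq_some_iff.1 h
    simp [norm, toWord_mul_mk_of_toWord_eq_append hL, hL]
  · simp [norm, toWord_mul_mk_of_getLast?_ne h]

noncomputable section Flow

variable [Fintype α]

def treeInflow (w : α × Bool → ℝ) (v : FreeGroup α) : ℝ :=
  match v.toWord with
  | [] => 0
  | x :: L => w x / (branching α : ℝ) ^ L.length

def treeFlow (w : α × Bool → ℝ) (v : FreeGroup α) (x : α × Bool) : ℝ :=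
  if norm (v * mk [x]) = norm v + 1 then treeInflow w (v * mk [x]) else -treeInflow w v

variable (w : α × Bool → ℝ)

theorem treeInflow_mk_singleton (x : α × Bool) : treeInflow w (mk [x]) = w x := by
  simp [treeInflow]

theorem treeInflow_of_toWord_eq_append {u v : FreeGroup α} {x : α × Bool}
    (h : u.toWord = v.toWord ++ [x]) (hv : v ≠ 1) :
    treeInflow w u = treeInflow w v / branching α := by
  obtain ⟨y, L, hyL⟩ := List.exists_cons_of_ne_nil (mt toWord_eq_nil_iff.1 hv)
  simp only [treeInflow, h, hyL, List.cons_append, List.length_append, List.length_singleton]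
  ring

theorem treeFlow_mul_mk_inv (v : FreeGroup α) (x : α × Bool) :
    treeFlow w (v * mk [x]) (x.1, !x.2) = -treeFlow w v x := by
  unfold treeFlow
  rw [mul_mk_mul_mk_inv]
  rcases norm_mul_mk_eq_or v x with h | h
  · rw [if_neg (by omega), if_pos h]
  · rw [if_pos h.symm, if_neg (by omega), neg_neg]

theorem treeFlow_one (x : α × Bool) : treeFlow w 1 x = w x := by
  simp [treeFlow, norm, treeInflow_mk_singleton]

theorem sum_treeFlow_of_ne_one {v : FreeGroup α} (hv : v ≠ 1) : ∑ x, treeFlow w v x = 0 := by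
  obtain ⟨L, y, hLy⟩ :=
    (List.eq_nil_or_concat v.toWord).resolve_left (mt toWord_eq_nil_iff.1 hv)
  rw [List.concat_eq_append] at hLy
  have : Nonempty α := ⟨y.1⟩
  set p : α × Bool := (y.1, !y.2)
  have hparent : treeFlow w v p = -treeInflow w v := by
    have hp : v.toWord = L ++ [(p.1, !p.2)] := by simpa [p] using hLy
    rw [treeFlow, if_neg (by simp [norm, toWord_mul_mk_of_toWord_eq_append hp, hLy]; omega)]
  have hchild : ∀ x ∈ ({p}ᶜ : Finset (α × Bool)),
      treeFlow w v x = treeInflow w v / branching α := by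
    intro x hx
    have hlast : v.toWord.getLast? ≠ some (x.1, !x.2) := by
      rintro hxy
      rw [hLy, List.getLast?_concat, Option.some.injEq] at hxy
      simp_all [p]
    have hx := toWord_mul_mk_of_getLast?_ne hlast
    simp [treeFlow, norm, hx, treeInflow_of_toWord_eq_append w hx hv]
  have hb : (branching α : ℝ) ≠ 0 := by exact_mod_cast (branching_pos (α := α)).ne'
  rw [Fintype.sum_eq_add_sum_compl p, hparent, Finset.sum_congr rfl hchild, Finset.sum_const,
    Finset.card_compl, Finset.card_singleton, nsmul_eq_mul]
  field_simp
  simp [branching]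

theorem sum_treeFlow (hw : ∑ x, w x = 0) (v : FreeGroup α) : ∑ x, treeFlow w v x = 0 := by
  rcases eq_or_ne v 1 with rfl | hv
  · simpa only [treeFlow_one] using hw
  · exact sum_treeFlow_of_ne_one w hv

theorem abs_treeInflow_le [Nonempty α] (v : FreeGroup α) :
    |treeInflow w v| ≤ (∑ x, |w x|) * branching α * (branching α : ℝ)⁻¹ ^ norm v := by
  have hb : (1 : ℝ) ≤ branching α := by exact_mod_cast branching_pos (α := α)
  unfold treeInflow norm
  split
  · next h => simp only [abs_zero]; positivity
  · next x L h =>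
    rw [h, List.length_cons, abs_div, abs_pow, Nat.abs_cast, inv_pow, pow_succ]
    field_simp
    exact Finset.single_le_sum (f := fun x => |w x|) (fun _ _ => abs_nonneg _) (Finset.mem_univ x)

theorem abs_treeFlow_le [Nonempty α] (v : FreeGroup α) (x : α × Bool) :
    |treeFlow w v x| ≤ (∑ x, |w x|) * branching α * (branching α : ℝ)⁻¹ ^ norm v := by
  have hb : (1 : ℝ) ≤ branching α := by exact_mod_cast branching_pos (α := α)
  unfold treeFlow
  split
  · next h =>
    refine (abs_treeInflow_le w _).trans ?_
    rw [h]
    gcongr _ * ?_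
    exact pow_le_pow_of_le_one (by positivity) (inv_le_one_of_one_le₀ hb) (Nat.le_succ _)
  · rw [abs_neg]
    exact abs_treeInflow_le w v

def treeCochain (e : FreeGroup α × α) : ℝ :=
  treeFlow w e.1 (e.2, true)

theorem treeCochain_mul_of_inv (v : FreeGroup α) (i : α) :
    treeCochain w (v * (of i)⁻¹, i) = -treeFlow w v (i, false) := by
  have : (of i)⁻¹ = mk [(i, false)] := by simp [of, inv_mk, invRev]
  rw [treeCochain, this]
  exact treeFlow_mul_mk_inv w v (i, false)

theorem sum_treeCochain_in_sub_sum_treeCochain_out (hw : ∑ x, w x = 0) (v : FreeGroup α) :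
    ∑ i, treeCochain w (v * (of i)⁻¹, i) - ∑ i, treeCochain w (v, i) = 0 := by
  have h := sum_treeFlow w hw v
  rw [Fintype.sum_prod_type] at h
  simp only [Fintype.sum_bool, Finset.sum_add_distrib] at h
  simp only [treeCochain_mul_of_inv, Finset.sum_neg_distrib]
  unfold treeCochain
  linarith

theorem memℓp_treeCochain [Nontrivial α] : Memℓp (treeCochain w) 2 := by
  have hb : (3 : ℝ) ≤ branching α := by exact_mod_cast three_le_branching (α := α)
  have hcard : (Fintype.card (α × Bool) : ℝ) = branching α + 1 := by
    exact_mod_cast card_prod_bool_eq_branching_add_one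
  set b : ℝ := (branching α : ℝ)
  have hr : Fintype.card (α × Bool) * (b⁻¹ ^ 2) < 1 := by
    rw [hcard, inv_pow, ← div_eq_mul_inv, div_lt_one (by positivity)]
    nlinarith
  have hsum : Summable fun e : FreeGroup α × α => (b⁻¹ ^ 2) ^ norm e.1 * 1 :=
    (summable_pow_norm (by positivity) hr).mul_of_nonneg (.of_finite)
      (fun _ => by positivity) (fun _ => zero_le_one)
  refine Memℓp.mono (memℓp_gen ?_) fun e => abs_treeFlow_le w e.1 (e.2, true)
  refine (hsum.mul_left (((∑ x, |w x|) * b) ^ 2)).congr fun e => ?_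
  simp only [ENNReal.toReal_ofNat, Real.rpow_two, Real.norm_eq_abs, mul_one]
  rw [abs_of_nonneg (by positivity)]
  ring

end Flow

end FreeGroup

/-- Nonvanishing of first reduced `ℓ²`-cohomology of the 4-regular tree (the Cayley
graph of the free group `F₂`): there is a nonzero square-summable function on the
edge set lying in the kernel of `d*`, i.e. a nonzero harmonic `ℓ²` 1-cochain.
Vertices: `V = F₂`; oriented edges: `E = V × Fin 2`, the edge `(v, i)` starting at
`v` and ending at `v * of i`.  The condition `d* c = 0` reads: for every vertex `v`,
the sum of `c` over edges ending at `v` minus the sum over edges starting at `v`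
vanishes. -/
theorem tree_harmonic_one_cochain_nonzero :
    ∃ c : lp (fun _ : FreeGroup (Fin 2) × Fin 2 => ℂ) 2,
      c ≠ 0 ∧
      ∀ v : FreeGroup (Fin 2),
        (∑ i : Fin 2, (c : FreeGroup (Fin 2) × Fin 2 → ℂ) (v * (FreeGroup.of i)⁻¹, i)) -
          (∑ i : Fin 2, (c : FreeGroup (Fin 2) × Fin 2 → ℂ) (v, i)) = 0 := by
  let w : Fin 2 × Bool → ℝ := fun x => if x = (0, true) then 3 else -1
  have hw : ∑ x, w x = 0 := by norm_num [w, Fintype.sum_prod_type]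
  have hc : Memℓp (fun e => (FreeGroup.treeCochain w e : ℂ)) 2 :=
    (FreeGroup.memℓp_treeCochain w).norm.mono fun e => (Complex.norm_real _).le
  refine ⟨⟨_, hc⟩, fun h => ?_, fun v => ?_⟩
  · have h10 := congrArg (fun c : lp _ 2 => (c : FreeGroup (Fin 2) × Fin 2 → ℂ) (1, 0)) h
    simp [FreeGroup.treeCochain, FreeGroup.treeFlow_one, w] at h10
  · exact_mod_cast FreeGroup.sum_treeCochain_in_sub_sum_treeCochain_out w hw v
end
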